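/- arXiv:2309.07246 — 2 statements merged into one kernel-verified Lean document; each statement's English description precedes it below -/
import Mathlib

section
/- Let c be a positive integer and I = ℕ × [c]. For any Sym-invariant lattice L ⊆ ℤ^(I), the monoid M = L ∩ ℤ_{≥0}^(I) has a finite equivariant Hilbert basis: there exists a finite subset H ⊆ M such that Sym(H) is the Hilbert basis of M. -/
open Finsupp

/-- A permutation of `ℕ` that moves only finitely many points:
an element of the infinite symmetric group `Sym`. -/
def IsFinPerm (σ : Equiv.Perm ℕ) : Prop := {i | σ i ≠ i}.Finite

/-- Membership in `Sym(n)`: permutations of `ℕ` fixing every index `≥ n`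
(the indices `0, 1, …, n-1` play the role of `[n] = {1, …, n}`). -/
def InSymN (n : ℕ) (σ : Equiv.Perm ℕ) : Prop := ∀ i, n ≤ i → σ i = i

/-- `u ∈ ℤ_{≥0}^{(I)}`. -/
def FsNonneg {I : Type*} (u : I →₀ ℤ) : Prop := ∀ i, 0 ≤ u i

/-- The partial order `⊑`. -/
def Sqle {I : Type*} (u v : I →₀ ℤ) : Prop := ∀ i, 0 ≤ u i * v i ∧ |u i| ≤ |v i|

/-- The Graver basis of (the underlying set of) a lattice `L`:
the `⊑`-minimal elements of `L \ {0}`. -/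
def GraverBasis {I : Type*} (L : Set (I →₀ ℤ)) : Set (I →₀ ℤ) :=
  {u | u ∈ L ∧ u ≠ 0 ∧ ∀ v ∈ L, v ≠ 0 → Sqle v u → v = u}

/-- The `L`-fiber of `u`. -/
def latFiber {I : Type*} (L : Set (I →₀ ℤ)) (u : I →₀ ℤ) : Set (I →₀ ℤ) :=
  {v | FsNonneg v ∧ u - v ∈ L}

/-- `B` is a Markov basis of `L`: for each nonnegative `u` the graph on the fiber
`F_L(u)` with edges `v ~ w` whenever `v - w ∈ B ∪ (-B)` is connected. -/
def IsMarkovBasis {I : Type*} (L B : Set (I →₀ ℤ)) : Prop :=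
  ∀ u, FsNonneg u → ∀ v ∈ latFiber L u, ∀ w ∈ latFiber L u,
    Relation.ReflTransGen
      (fun x y => x ∈ latFiber L u ∧ y ∈ latFiber L u ∧ (x - y ∈ B ∨ y - x ∈ B)) v w

/-- A term order on `ℤ_{≥0}^{(I)}`: an additive well-order on the nonnegative elements. -/
structure TermOrderZ (I : Type*) where
  lt : (I →₀ ℤ) → (I →₀ ℤ) → Prop
  irrefl : ∀ u, FsNonneg u → ¬ lt u u
  trans : ∀ u v w, FsNonneg u → FsNonneg v → FsNonneg w → lt u v → lt v w → lt u w
  total : ∀ u v, FsNonneg u → FsNonneg v → u ≠ v → lt u v ∨ lt v u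
  min_exists : ∀ S : Set (I →₀ ℤ), (∀ u ∈ S, FsNonneg u) → S.Nonempty →
    ∃ m ∈ S, ∀ u ∈ S, u ≠ m → ¬ lt u m
  add_right : ∀ u v w, FsNonneg u → FsNonneg v → FsNonneg w → lt u v → lt (u + w) (v + w)

/-- There is a directed path (w.r.t. `lt`, with moves from `B ∪ (-B)`) inside the fiber
of `u` from `u` to the `lt`-minimal element of the fiber. -/
def GroebnerPath {I : Type*} (L : Set (I →₀ ℤ)) (lt : (I →₀ ℤ) → (I →₀ ℤ) → Prop)
    (B : Set (I →₀ ℤ)) (u : I →₀ ℤ) : Prop :=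
  ∃ (s : ℕ) (v : ℕ → (I →₀ ℤ)), v 0 = u ∧ (∀ t ≤ s, v t ∈ latFiber L u) ∧
    (∀ t < s, lt (v (t + 1)) (v t) ∧ (v t - v (t + 1) ∈ B ∨ v (t + 1) - v t ∈ B)) ∧
    (∀ w ∈ latFiber L u, w ≠ v s → lt (v s) w)

/-- `B` is a Gröbner basis of `L` with respect to the term order `lt`. -/
def IsGroebnerBasis {I : Type*} (L : Set (I →₀ ℤ))
    (lt : (I →₀ ℤ) → (I →₀ ℤ) → Prop) (B : Set (I →₀ ℤ)) : Prop :=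
  ∀ u, FsNonneg u → GroebnerPath L lt B u

/-- `H` is a Hilbert basis of the (set underlying a) monoid `M`:
a generating set of `M` contained in every generating set of `M`. -/
def IsHilbertBasis {N : Type*} [AddCommMonoid N] (M H : Set N) : Prop :=
  H ⊆ M ∧ (AddSubmonoid.closure H : Set N) = M ∧
    ∀ A ⊆ M, (AddSubmonoid.closure A : Set N) = M → H ⊆ A

/-- `u` is an irreducible element of `M`. -/
def IsIrredElem {N : Type*} [AddCommMonoid N] (M : Set N) (u : N) : Prop :=
  u ∈ M ∧ u ≠ 0 ∧ ∀ v ∈ M, ∀ w ∈ M, u = v + w → v = 0 ∨ w = 0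

/-- The action of a permutation of `ℕ` on `ℤ^{(ℕ^d × [c])}`:
`(σ·u)((σ i₁, …, σ i_d), j) = u((i₁, …, i_d), j)`. -/
noncomputable def permActd (d c : ℕ) (σ : Equiv.Perm ℕ) (u : (Fin d → ℕ) × Fin c →₀ ℤ) :
    (Fin d → ℕ) × Fin c →₀ ℤ :=
  Finsupp.equivMapDomain
    (Equiv.prodCongr ((Equiv.refl (Fin d)).arrowCongr σ) (Equiv.refl (Fin c))) u

/-- The action of a permutation of `ℕ` on `ℤ^{(ℕ × [c])}`: `(σ·u)(σ i, j) = u(i, j)`. -/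
noncomputable def permAct1 (c : ℕ) (σ : Equiv.Perm ℕ) (u : ℕ × Fin c →₀ ℤ) :
    ℕ × Fin c →₀ ℤ :=
  Finsupp.equivMapDomain (Equiv.prodCongr σ (Equiv.refl (Fin c))) u

/-- The action of a permutation of `ℕ` on `ℤ^{(ℕ)}`: `(σ·u)(σ i) = u i`. -/
noncomputable def permAct0 (σ : Equiv.Perm ℕ) (u : ℕ →₀ ℤ) : ℕ →₀ ℤ :=
  Finsupp.equivMapDomain σ u

/-- `Sym(B)` for `B ⊆ ℤ^{(ℕ^d × [c])}`. -/
def symOrbitd (d c : ℕ) (B : Set ((Fin d → ℕ) × Fin c →₀ ℤ)) :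
    Set ((Fin d → ℕ) × Fin c →₀ ℤ) :=
  {w | ∃ σ, IsFinPerm σ ∧ ∃ b ∈ B, w = permActd d c σ b}

/-- `Sym(n)(B)` for `B ⊆ ℤ^{(ℕ^d × [c])}`. -/
def symOrbitNd (d c n : ℕ) (B : Set ((Fin d → ℕ) × Fin c →₀ ℤ)) :
    Set ((Fin d → ℕ) × Fin c →₀ ℤ) :=
  {w | ∃ σ, InSymN n σ ∧ ∃ b ∈ B, w = permActd d c σ b}

/-- `Sym(B)` for `B ⊆ ℤ^{(ℕ × [c])}`. -/
def symOrbit1 (c : ℕ) (B : Set (ℕ × Fin c →₀ ℤ)) : Set (ℕ × Fin c →₀ ℤ) :=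
  {w | ∃ σ, IsFinPerm σ ∧ ∃ b ∈ B, w = permAct1 c σ b}

/-- `Sym(B)` for `B ⊆ ℤ^{(ℕ)}`. -/
def symOrbit0 (B : Set (ℕ →₀ ℤ)) : Set (ℕ →₀ ℤ) :=
  {w | ∃ σ, IsFinPerm σ ∧ ∃ b ∈ B, w = permAct0 σ b}

/-- `supp(u) ⊆ I_n = [n]^d × [c]`. -/
def SuppIn (d c n : ℕ) (u : (Fin d → ℕ) × Fin c →₀ ℤ) : Prop :=
  ∀ p : (Fin d → ℕ) × Fin c, u p ≠ 0 → ∀ k, p.1 k < n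

/-- `ℤ^{(I_n)}`, for `I_n = [n]^d × [c]`, as a subgroup of `ℤ^{(ℕ^d × [c])}`. -/
noncomputable def suppSubgroup (d c n : ℕ) : AddSubgroup ((Fin d → ℕ) × Fin c →₀ ℤ) where
  carrier := {u | SuppIn d c n u}
  zero_mem' := by intro p hp; simp at hp
  add_mem' := by
    intro a b ha hb p hp k
    by_cases h : a p = 0
    · refine hb p ?_ k
      intro hbp
      exact hp (by simp [h, hbp])
    · exact ha p h k
  neg_mem' := by
    intro a ha p hp k
    refine ha p ?_ k
    intro hap
    exact hp (by simp [hap])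

/-- The positive part `u⁺`. -/
noncomputable def fsPos {I : Type*} (u : I →₀ ℤ) : I →₀ ℤ :=
  u.mapRange (fun z => max z 0) (by simp)

/-- The negative part `u⁻`. -/
noncomputable def fsNeg {I : Type*} (u : I →₀ ℤ) : I →₀ ℤ :=
  u.mapRange (fun z => max (-z) 0) (by simp)


lemma isFinPerm_one : IsFinPerm 1 := by simp [IsFinPerm]

lemma isFinPerm_mul {σ τ : Equiv.Perm ℕ} (h1 : IsFinPerm σ) (h2 : IsFinPerm τ) :
    IsFinPerm (σ * τ) := by
  refine (h1.union h2).subset ?_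
  intro i hi
  by_contra h
  simp only [Set.mem_union, Set.mem_setOf_eq, not_or, not_not] at h
  exact hi (by simp [Equiv.Perm.mul_apply, h.2, h.1])

lemma isFinPerm_inv {σ : Equiv.Perm ℕ} (h : IsFinPerm σ) : IsFinPerm σ⁻¹ := by
  have : {i | σ⁻¹ i ≠ i} = {i | σ i ≠ i} := by
    ext i
    simp only [Set.mem_setOf_eq, ne_eq, not_iff_not]
    constructor
    · intro hh; conv_lhs => rw [← hh]
      simp
    · intro hh; conv_lhs => rw [← hh]
      simp
  rwa [IsFinPerm, this]

lemma isFinPerm_swap (a b : ℕ) : IsFinPerm (Equiv.swap a b) := by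
  refine Set.Finite.subset ((Set.finite_singleton b).insert a) ?_
  intro i hi
  by_contra h
  simp only [Set.mem_insert_iff, Set.mem_singleton_iff, not_or] at h
  exact hi (Equiv.swap_apply_of_ne_of_ne h.1 h.2)

lemma permAct1_apply (c : ℕ) (σ : Equiv.Perm ℕ) (u : ℕ × Fin c →₀ ℤ) (n : ℕ) (t : Fin c) :
    permAct1 c σ u (n, t) = u (σ⁻¹ n, t) := by
  simp [permAct1, Finsupp.equivMapDomain_apply]

lemma permAct1_mul (c : ℕ) (σ τ : Equiv.Perm ℕ) (u : ℕ × Fin c →₀ ℤ) :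
    permAct1 c σ (permAct1 c τ u) = permAct1 c (σ * τ) u := by
  ext ⟨n, t⟩
  simp [permAct1_apply, mul_inv_rev]

lemma permAct1_one (c : ℕ) (u : ℕ × Fin c →₀ ℤ) : permAct1 c 1 u = u := by
  ext ⟨n, t⟩; simp [permAct1_apply]

lemma permAct1_add (c : ℕ) (σ : Equiv.Perm ℕ) (u v : ℕ × Fin c →₀ ℤ) :
    permAct1 c σ (u + v) = permAct1 c σ u + permAct1 c σ v := by
  ext ⟨n, t⟩; simp [permAct1_apply]

lemma permAct1_zero (c : ℕ) (σ : Equiv.Perm ℕ) : permAct1 c σ 0 = 0 := by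
  ext ⟨n, t⟩; simp [permAct1_apply]

lemma permAct1_eq_zero_iff (c : ℕ) (σ : Equiv.Perm ℕ) (u : ℕ × Fin c →₀ ℤ) :
    permAct1 c σ u = 0 ↔ u = 0 := by
  constructor
  · intro h
    ext ⟨n, t⟩
    have := DFunLike.congr_fun h (σ n, t)
    simpa [permAct1_apply] using this
  · rintro rfl; exact permAct1_zero c σ

lemma fsNonneg_permAct1 {c : ℕ} {σ : Equiv.Perm ℕ} {u : ℕ × Fin c →₀ ℤ}
    (h : FsNonneg u) : FsNonneg (permAct1 c σ u) := by
  rintro ⟨n, t⟩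
  rw [permAct1_apply]
  exact h _

lemma exists_finPerm_eq : ∀ (m : ℕ) (a b : Fin m → ℕ), Function.Injective a →
    Function.Injective b → ∃ σ : Equiv.Perm ℕ, IsFinPerm σ ∧ ∀ i, σ (a i) = b i := by
  intro m
  induction m with
  | zero => exact fun a b _ _ => ⟨1, isFinPerm_one, fun i => i.elim0⟩
  | succ m ih =>
    intro a b ha hb
    obtain ⟨σ, hσf, hσ⟩ := ih (a ∘ Fin.castSucc) (b ∘ Fin.castSucc)
      (ha.comp (Fin.castSucc_injective m)) (hb.comp (Fin.castSucc_injective m))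
    refine ⟨Equiv.swap (σ (a (Fin.last m))) (b (Fin.last m)) * σ,
      isFinPerm_mul (isFinPerm_swap _ _) hσf, ?_⟩
    intro i
    refine Fin.lastCases ?_ ?_ i
    · simp [Equiv.Perm.mul_apply]
    · intro j
      have h1 : σ (a (Fin.castSucc j)) = b (Fin.castSucc j) := hσ j
      have h2 : b (Fin.castSucc j) ≠ σ (a (Fin.last m)) := by
        rw [← h1]
        intro h
        exact absurd (ha (σ.injective h)) (Fin.castSucc_lt_last j).ne
      have h3 : b (Fin.castSucc j) ≠ b (Fin.last m) := by
        intro h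
        exact absurd (hb h) (Fin.castSucc_lt_last j).ne
      simp [Equiv.Perm.mul_apply, h1, Equiv.swap_apply_of_ne_of_ne h2 h3]

noncomputable def colFn (c : ℕ) (u : ℕ × Fin c →₀ ℤ) (n : ℕ) : Fin c → ℕ :=
  fun t => (u (n, t)).toNat

noncomputable def fstSupp (c : ℕ) (u : ℕ × Fin c →₀ ℤ) : Finset ℕ :=
  u.support.image Prod.fst

noncomputable def lcols (c : ℕ) (u : ℕ × Fin c →₀ ℤ) : List (Fin c → ℕ) :=
  ((fstSupp c u).sort (· ≤ ·)).map (colFn c u)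

lemma apply_eq_zero_of_not_mem_fstSupp {c : ℕ} {u : ℕ × Fin c →₀ ℤ} {m : ℕ}
    (h : m ∉ fstSupp c u) (t : Fin c) : u (m, t) = 0 := by
  by_contra hne
  exact h (Finset.mem_image.2 ⟨(m, t), Finsupp.mem_support_iff.2 hne, rfl⟩)

lemma exists_perm_le {c : ℕ} {u v : ℕ × Fin c →₀ ℤ} (hu : FsNonneg u) (hv : FsNonneg v)
    (h : List.SublistForall₂ (· ≤ ·) (lcols c u) (lcols c v)) :
    ∃ σ, IsFinPerm σ ∧ ∀ p, permAct1 c σ u p ≤ v p := by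
  classical
  obtain ⟨l, hfor, hsub⟩ := List.sublistForall₂_iff.1 h
  obtain ⟨g, hg⟩ := List.sublist_iff_exists_fin_orderEmbedding_get_eq.1 hsub
  set A := (fstSupp c u).sort (· ≤ ·) with hA
  set B := (fstSupp c v).sort (· ≤ ·) with hB
  have hlenA : (lcols c u).length = A.length := List.length_map _
  have hlenB : (lcols c v).length = B.length := List.length_map _
  have h1 : A.length = l.length := hlenA ▸ hfor.length_eq
  have hainj : Function.Injective A.get :=
    List.nodup_iff_injective_get.1 (Finset.sort_nodup _ _)
  set b : Fin A.length → ℕ :=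
    fun i => B.get (Fin.cast hlenB (g (Fin.cast h1 i))) with hbdef
  have hbinj : Function.Injective b :=
    (List.nodup_iff_injective_get.1 (Finset.sort_nodup _ _)).comp
      ((Fin.cast_injective _).comp (g.injective.comp (Fin.cast_injective _)))
  obtain ⟨σ, hσf, hσ⟩ := exists_finPerm_eq A.length A.get b hainj hbinj
  have key : ∀ m t, u (m, t) ≤ v (σ m, t) := by
    intro m t
    by_cases hm : m ∈ fstSupp c u
    · have hmA : m ∈ A := (Finset.mem_sort _).2 hm
      obtain ⟨i, hi⟩ := List.mem_iff_get.1 hmA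
      have hcol : colFn c u m ≤ colFn c v (σ m) := by
        have e1 : colFn c u m = (lcols c u).get (Fin.cast hlenA.symm i) := by
          rw [← hi]; simp [lcols, hA]
          rfl
        have e2 : l.get (Fin.cast h1 i) = (lcols c v).get (g (Fin.cast h1 i)) := hg _
        have e3 : (lcols c v).get (g (Fin.cast h1 i)) = colFn c v (σ m) := by
          rw [← hi, hσ i, hbdef]
          simp [lcols, hB]
          rfl
        have e4 := (List.forall₂_iff_get.1 hfor).2 i.1
          (by simpa [hlenA] using i.2) (by omega)
        rw [e1]
        rw [← e3, ← e2]
        convert e4 using 2 <;> simp [Fin.cast]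
      have := hcol t
      simp only [colFn] at this
      have h5 := hu (m, t)
      have h6 := hv (σ m, t)
      omega
    · rw [apply_eq_zero_of_not_mem_fstSupp hm]
      exact hv _
  refine ⟨σ, hσf, ?_⟩
  rintro ⟨n, t⟩
  rw [permAct1_apply]
  have := key (σ⁻¹ n) t
  simpa using this

lemma exists_dominate {c : ℕ} (f : ℕ → (ℕ × Fin c →₀ ℤ)) (hf : ∀ n, FsNonneg (f n)) :
    ∃ i j, i < j ∧ ∃ σ, IsFinPerm σ ∧ ∀ p, permAct1 c σ (f i) p ≤ f j p := by
  have hpwo : (Set.univ : Set (Fin c → ℕ)).IsPWO :=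
    by simpa using (Set.IsPWO.pi (s := fun _ : Fin c => (Set.univ : Set ℕ))
      (fun _ => Set.isPWO_univ_iff.2 inferInstance))
  have H := Set.PartiallyWellOrderedOn.partiallyWellOrderedOn_sublistForall₂
    (fun x y : Fin c → ℕ => x ≤ y) hpwo
  obtain ⟨i, j, hij, hsub⟩ := H (fun n => ⟨lcols c (f n), fun x _ => Set.mem_univ x⟩)
  exact ⟨i, j, hij, exists_perm_le (hf i) (hf j) hsub⟩

noncomputable def degi {c : ℕ} (u : ℕ × Fin c →₀ ℤ) : ℤ := u.sum fun _ z => z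

lemma degi_add {c : ℕ} (u v : ℕ × Fin c →₀ ℤ) : degi (u + v) = degi u + degi v :=
  Finsupp.sum_add_index' (by simp) (by simp)

lemma degi_nonneg {c : ℕ} {u : ℕ × Fin c →₀ ℤ} (h : FsNonneg u) : 0 ≤ degi u :=
  Finset.sum_nonneg fun p _ => h p

lemma degi_pos {c : ℕ} {u : ℕ × Fin c →₀ ℤ} (h : FsNonneg u) (h0 : u ≠ 0) :
    0 < degi u := by
  obtain ⟨p, hp⟩ := Finsupp.support_nonempty_iff.2 h0
  refine Finset.sum_pos' (fun q _ => h q) ⟨p, hp, ?_⟩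
  have hne := Finsupp.mem_support_iff.1 hp
  exact lt_of_le_of_ne (h p) (Ne.symm hne)

section Main

variable {c : ℕ} (L : AddSubgroup (ℕ × Fin c →₀ ℤ))

/-- The monoid `M = L ∩ ℤ_{≥0}` as an `AddSubmonoid`. -/
noncomputable def Msub : AddSubmonoid (ℕ × Fin c →₀ ℤ) where
  carrier := {u | u ∈ L ∧ FsNonneg u}
  zero_mem' := ⟨L.zero_mem, fun p => le_refl _⟩
  add_mem' := fun ha hb => ⟨L.add_mem ha.1 hb.1, fun p => by
    have := ha.2 p; have := hb.2 p
    simp only [Finsupp.add_apply]; omega⟩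

/-- The set of pointwise-minimal nonzero elements of `M`. -/
def Sset : Set (ℕ × Fin c →₀ ℤ) :=
  {u | u ∈ Msub L ∧ u ≠ 0 ∧
    ∀ v ∈ Msub L, v ≠ 0 → (∀ p, v p ≤ u p) → v = u}

lemma Sset_subset_M : Sset L ⊆ (Msub L : Set _) := fun _ h => h.1

/-- Generation: every element of `M` lies in the monoid closure of `Sset`. -/
lemma mem_closure_Sset : ∀ (n : ℕ) (u : ℕ × Fin c →₀ ℤ), u ∈ Msub L →
    (degi u).toNat ≤ n → u ∈ AddSubmonoid.closure (Sset L) := by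
  intro n
  induction n with
  | zero =>
    intro u hu hdeg
    have h0 : u = 0 := by
      by_contra h
      have := degi_pos hu.2 h
      omega
    rw [h0]; exact zero_mem _
  | succ n ih =>
    intro u hu hdeg
    by_cases h0 : u = 0
    · rw [h0]; exact zero_mem _
    · -- find a minimal-degree nonzero element below u
      classical
      set T : Set ℕ := {d | ∃ v, v ∈ Msub L ∧ v ≠ 0 ∧ (∀ p, v p ≤ u p) ∧
        (degi v).toNat = d} with hT
      have hTne : T.Nonempty := ⟨(degi u).toNat, u, hu, h0, fun p => le_refl _, rfl⟩
      obtain ⟨d, hdT, hdmin⟩ := Nat.lt_wfRel.wf.has_min T hTne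
      obtain ⟨v, hvM, hv0, hvle, hvdeg⟩ := hdT
      have hvS : v ∈ Sset L := by
        refine ⟨hvM, hv0, ?_⟩
        intro w hwM hw0 hwle
        by_contra hne
        -- then degi w < degi v, contradicting minimality
        have hsub : FsNonneg (v - w) := fun p => by
          have := hwle p
          simp only [Finsupp.sub_apply]; omega
        have hsne : v - w ≠ 0 := sub_ne_zero.2 (Ne.symm hne)
        have hdq : degi v = degi w + degi (v - w) := by
          rw [← degi_add]; congr 1; abel
        have h1 := degi_pos hsub hsne
        have h2 := degi_nonneg hwM.2
        have h3 : (degi w).toNat < d := by omega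
        exact hdmin _ ⟨w, hwM, hw0, fun p => le_trans (hwle p) (hvle p), rfl⟩ h3
      have huv : u - v ∈ Msub L := ⟨L.sub_mem hu.1 hvM.1, fun p => by
        have := hvle p; simp only [Finsupp.sub_apply]; omega⟩
      have hdq : degi u = degi (u - v) + degi v := by
        rw [← degi_add]; congr 1; abel
      have h1 := degi_pos hvM.2 hv0
      have h2 := degi_nonneg huv.2
      have hstep : (degi (u - v)).toNat ≤ n := by omega
      have := ih (u - v) huv hstep
      have : v + (u - v) ∈ AddSubmonoid.closure (Sset L) :=
        add_mem (AddSubmonoid.subset_closure hvS) this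
      simpa using this

/-- `Sset` is invariant under the Sym action, given `L` is. -/
lemma Sset_perm (hL : ∀ σ, IsFinPerm σ → ∀ u ∈ L, permAct1 c σ u ∈ L)
    {σ : Equiv.Perm ℕ} (hσ : IsFinPerm σ) {h : ℕ × Fin c →₀ ℤ} (hh : h ∈ Sset L) :
    permAct1 c σ h ∈ Sset L := by
  obtain ⟨⟨hhL, hhnn⟩, hh0, hhmin⟩ := hh
  refine ⟨⟨hL σ hσ h hhL, fsNonneg_permAct1 hhnn⟩, ?_, ?_⟩
  · exact fun hc => hh0 ((permAct1_eq_zero_iff c σ h).1 hc)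
  · intro v hvM hv0 hvle
    have hv' : permAct1 c σ⁻¹ v ∈ Msub L :=
      ⟨hL σ⁻¹ (isFinPerm_inv hσ) v hvM.1, fsNonneg_permAct1 hvM.2⟩
    have hv'0 : permAct1 c σ⁻¹ v ≠ 0 :=
      fun hc => hv0 ((permAct1_eq_zero_iff c σ⁻¹ v).1 hc)
    have hv'le : ∀ p, permAct1 c σ⁻¹ v p ≤ h p := by
      rintro ⟨n, t⟩
      rw [permAct1_apply, inv_inv]
      have := hvle (σ n, t)
      simpa [permAct1_apply] using this
    have := hhmin _ hv' hv'0 hv'le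
    have hv : permAct1 c σ (permAct1 c σ⁻¹ v) = permAct1 c σ h := by rw [this]
    rwa [permAct1_mul, mul_inv_cancel, permAct1_one] at hv

/-- Elements of `Sset` are irreducible. -/
lemma Sset_irred {h : ℕ × Fin c →₀ ℤ} (hh : h ∈ Sset L) :
    ∀ v ∈ Msub L, ∀ w ∈ Msub L, h = v + w → v = 0 ∨ w = 0 := by
  obtain ⟨hhM, hh0, hhmin⟩ := hh
  intro v hv w hw heq
  by_cases hv0 : v = 0
  · exact Or.inl hv0
  · right
    have hvle : ∀ p, v p ≤ h p := by
      intro p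
      have := hw.2 p
      rw [heq]
      simp only [Finsupp.add_apply]; omega
    have := hhmin v hv hv0 hvle
    rw [this] at heq
    exact (left_eq_add).1 heq

lemma mem_of_irred_sum {A : Set (ℕ × Fin c →₀ ℤ)} (hA : A ⊆ (Msub L : Set _))
    {h : ℕ × Fin c →₀ ℤ} (hh : h ∈ Sset L) :
    ∀ l : List (ℕ × Fin c →₀ ℤ), (∀ y ∈ l, y ∈ A) → l.sum = h → h ∈ A := by
  intro l
  induction l with
  | nil =>
    intro _ hsum
    exact absurd hsum.symm hh.2.1
  | cons x t iht =>
    intro hmem hsum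
    have hx : x ∈ A := hmem x List.mem_cons_self
    have htM : t.sum ∈ Msub L :=
      list_sum_mem fun y hy => hA (hmem y (List.mem_cons_of_mem x hy))
    rw [List.sum_cons] at hsum
    rcases Sset_irred L hh x (hA hx) t.sum htM hsum.symm with h1 | h1
    · rw [h1, zero_add] at hsum
      exact iht (fun y hy => hmem y (List.mem_cons_of_mem x hy)) hsum
    · rw [h1, add_zero] at hsum
      rwa [← hsum]

/-- Finitely many orbits cover `Sset`. -/
lemma exists_finite_cover (hL : ∀ σ, IsFinPerm σ → ∀ u ∈ L, permAct1 c σ u ∈ L) :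
    ∃ H : Finset (ℕ × Fin c →₀ ℤ), ↑H ⊆ Sset L ∧ Sset L ⊆ symOrbit1 c ↑H := by
  classical
  by_contra hcon
  push_neg at hcon
  have hch : ∀ H : Finset (ℕ × Fin c →₀ ℤ), ∃ x,
      ↑H ⊆ Sset L → (x ∈ Sset L ∧ x ∉ symOrbit1 c ↑H) := by
    intro H
    by_cases hH : ↑H ⊆ Sset L
    · obtain ⟨x, hx1, hx2⟩ := Set.not_subset.1 (hcon H hH)
      exact ⟨x, fun _ => ⟨hx1, hx2⟩⟩
    · exact ⟨0, fun hx => absurd hx hH⟩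
  choose pick hpick using hch
  set G : ℕ → Finset (ℕ × Fin c →₀ ℤ) :=
    fun n => Nat.rec ∅ (fun _ Gn => insert (pick Gn) Gn) n with hG
  have hGsucc : ∀ n, G (n + 1) = insert (pick (G n)) (G n) := fun n => rfl
  have hGS : ∀ n, ↑(G n) ⊆ Sset L := by
    intro n
    induction n with
    | zero => simp [hG]
    | succ n ih =>
      rw [hGsucc, Finset.coe_insert]
      exact Set.insert_subset ((hpick (G n) ih).1) ih
  have hGmono : ∀ i j, i ≤ j → G i ⊆ G j := by
    intro i j hij
    induction j with
    | zero => simp_all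
    | succ j ihj =>
      rcases Nat.lt_or_ge i (j + 1) with hlt | hge
      · exact (ihj (by omega)).trans (by rw [hGsucc]; exact Finset.subset_insert _ _)
      · have : i = j + 1 := by omega
        rw [this]
  set f : ℕ → (ℕ × Fin c →₀ ℤ) := fun n => pick (G n) with hf
  have hfS : ∀ n, f n ∈ Sset L := fun n => (hpick (G n) (hGS n)).1
  have hfnot : ∀ n, f n ∉ symOrbit1 c ↑(G n) := fun n => (hpick (G n) (hGS n)).2
  obtain ⟨i, j, hij, σ, hσ, hle⟩ := exists_dominate f (fun n => (hfS n).1.2)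
  have hw : permAct1 c σ (f i) ∈ Msub L :=
    ⟨hL σ hσ (f i) (hfS i).1.1, fsNonneg_permAct1 (hfS i).1.2⟩
  have hw0 : permAct1 c σ (f i) ≠ 0 :=
    fun hc0 => (hfS i).2.1 ((permAct1_eq_zero_iff c σ (f i)).1 hc0)
  have heq := (hfS j).2.2 _ hw hw0 hle
  apply hfnot j
  refine ⟨σ, hσ, f i, ?_, heq.symm⟩
  have : f i ∈ G (i + 1) := by rw [hGsucc]; exact Finset.mem_insert_self _ _
  exact Finset.mem_coe.2 (hGmono (i + 1) j hij this)

end Main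


/-- For `I = ℕ × [c]` and any `Sym`-invariant lattice `L ⊆ ℤ^{(I)}`,
the monoid `M = L ∩ ℤ_{≥0}^{(I)}` has a finite equivariant Hilbert basis. -/
theorem finite_equivariant_hilbert_basis (c : ℕ) (hc : 0 < c)
    (L : AddSubgroup (ℕ × Fin c →₀ ℤ))
    (hL : ∀ σ, IsFinPerm σ → ∀ u ∈ L, permAct1 c σ u ∈ L) :
    ∃ H : Finset (ℕ × Fin c →₀ ℤ),
      (↑H : Set (ℕ × Fin c →₀ ℤ)) ⊆ {u | u ∈ L ∧ FsNonneg u} ∧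
      IsHilbertBasis {u : ℕ × Fin c →₀ ℤ | u ∈ L ∧ FsNonneg u} (symOrbit1 c ↑H) := by
  obtain ⟨H, hHS, hSH⟩ := exists_finite_cover L hL
  have horbS : symOrbit1 c ↑H ⊆ Sset L := by
    rintro x ⟨σ, hσ, b, hb, rfl⟩
    exact Sset_perm L hL hσ (hHS hb)
  have horbM : symOrbit1 c ↑H ⊆ (Msub L : Set _) := fun x hx => (horbS hx).1
  refine ⟨H, fun x hx => (hHS hx).1, horbM, ?_, ?_⟩
  · apply subset_antisymm
    · exact fun x hx => AddSubmonoid.closure_le.2 horbM hx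
    · intro u hu
      have h1 : u ∈ AddSubmonoid.closure (Sset L) :=
        mem_closure_Sset L (degi u).toNat u hu le_rfl
      exact AddSubmonoid.closure_mono hSH h1
  · intro A hA hAcl x hx
    have hxS : x ∈ Sset L := horbS hx
    have hxcl : x ∈ AddSubmonoid.closure A := by
      rw [← SetLike.mem_coe, hAcl]
      exact hxS.1
    obtain ⟨l, hl, hsum⟩ := AddSubmonoid.exists_list_of_mem_closure hxcl
    exact mem_of_irred_sum L hA hxS l hl hsum
end

section
/- Let L ⊆ ℤ^(ℕ) be a Sym-invariant lattice. For u ∈ ℤ^(ℕ) set s(u) = Σ_{i∈ℕ} u(i), and let s_L be the nonnegative generator of the subgroup of ℤ generated by {s(u) : u ∈ L}. Then: (i) s_L·e_1 ∈ L; (ii) if there exists u ∈ L with s(u) ≠ 0, then s_L·e_1 is a ⊑-minimal element of L \ {0}, i.e. it belongs to the Graver basis of L. -/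
open Finsupp

lemma swap_finperm (i j : ℕ) : IsFinPerm (Equiv.swap i j) := by
  apply Set.Finite.subset ((Set.finite_singleton j).insert i)
  intro k hk
  simp only [Set.mem_setOf_eq] at hk
  by_contra h
  simp only [Set.mem_insert_iff, Set.mem_singleton_iff, not_or] at h
  exact hk (Equiv.swap_apply_of_ne_of_ne h.1 h.2)

lemma key (L : AddSubgroup (ℕ →₀ ℤ))
    (hL : ∀ σ, IsFinPerm σ → ∀ u ∈ L, permAct0 σ u ∈ L)
    (u : ℕ →₀ ℤ) (hu : u ∈ L) (i : ℕ) (hi : i ≠ 0) :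
    Finsupp.single i (u i) - Finsupp.single 0 (u i) ∈ L := by
  obtain ⟨j, hj⟩ := Infinite.exists_notMem_finset (insert 0 (insert i u.support))
  simp only [Finset.mem_insert, Finsupp.mem_support_iff, not_or, not_not] at hj
  obtain ⟨hj0, hji, hjs⟩ := hj
  have h1 : u - permAct0 (Equiv.swap i j) u
      = Finsupp.single i (u i) - Finsupp.single j (u i) := by
    ext k
    simp only [Finsupp.sub_apply, Finsupp.single_apply]
    rw [show (permAct0 (Equiv.swap i j) u) k = u ((Equiv.swap i j).symm k) from rfl,
      Equiv.symm_swap]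
    rcases eq_or_ne k i with rfl | hki
    · rw [Equiv.swap_apply_left]; simp [hjs, hji]
    · rcases eq_or_ne k j with rfl | hkj
      · rw [Equiv.swap_apply_right]; simp [hjs, Ne.symm hji]
      · rw [Equiv.swap_apply_of_ne_of_ne hki hkj]
        simp [Ne.symm hki, Ne.symm hkj]
  have h2 : Finsupp.single i (u i) - Finsupp.single j (u i) ∈ L := by
    rw [← h1]; exact sub_mem hu (hL _ (swap_finperm i j) u hu)
  have h3 := hL _ (swap_finperm 0 j) _ h2
  have h4 : permAct0 (Equiv.swap 0 j) (Finsupp.single i (u i) - Finsupp.single j (u i))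
      = Finsupp.single i (u i) - Finsupp.single 0 (u i) := by
    ext k
    rw [show (permAct0 (Equiv.swap 0 j) (Finsupp.single i (u i) - Finsupp.single j (u i))) k
      = (Finsupp.single i (u i) - Finsupp.single j (u i)) ((Equiv.swap 0 j).symm k) from rfl,
      Equiv.symm_swap]
    simp only [Finsupp.sub_apply, Finsupp.single_apply]
    rcases eq_or_ne k 0 with rfl | hk0
    · rw [Equiv.swap_apply_left]; simp [Ne.symm hji, hi]
    · rcases eq_or_ne k j with rfl | hkj
      · rw [Equiv.swap_apply_right]; simp [hi, hj0, Ne.symm hji, Ne.symm hj0]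
      · rw [Equiv.swap_apply_of_ne_of_ne hk0 hkj]
        simp [Ne.symm hkj, Ne.symm hk0]
  rw [h4] at h3; exact h3

lemma collapse (L : AddSubgroup (ℕ →₀ ℤ))
    (hL : ∀ σ, IsFinPerm σ → ∀ u ∈ L, permAct0 σ u ∈ L)
    (u : ℕ →₀ ℤ) (hu : u ∈ L) :
    Finsupp.single 0 (u.sum fun _ m => m) ∈ L := by
  set w : ℕ →₀ ℤ := ∑ i ∈ u.support.erase 0,
    (Finsupp.single i (u i) - Finsupp.single 0 (u i)) with hw
  have hwL : w ∈ L := by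
    apply sum_mem
    intro i hi
    exact key L hL u hu i (Finset.ne_of_mem_erase hi)
  have heq : u - w = Finsupp.single 0 (u.sum fun _ m => m) := by
    ext k
    rw [Finsupp.sub_apply, hw, Finsupp.finset_sum_apply]
    simp only [Finsupp.sub_apply, Finsupp.single_apply, Finset.sum_sub_distrib]
    rcases eq_or_ne k 0 with rfl | hk0
    · rw [if_pos rfl]
      have e1 : ∑ i ∈ u.support.erase 0, (if i = 0 then u i else 0) = 0 := by
        apply Finset.sum_eq_zero
        intro i hi
        rw [if_neg (Finset.ne_of_mem_erase hi)]
      have e2 : ∑ i ∈ u.support.erase 0, (if (0:ℕ) = 0 then u i else 0)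
          = ∑ i ∈ u.support.erase 0, u i := by simp
      rw [e1, e2, zero_sub, sub_neg_eq_add, Finsupp.sum]
      have h3 : u 0 + ∑ i ∈ u.support.erase 0, u i
          = ∑ i ∈ insert 0 u.support, u i := by
        rw [← Finset.erase_insert_eq_erase,
          Finset.add_sum_erase _ u (Finset.mem_insert_self 0 u.support)]
      rw [h3]
      by_cases h0 : 0 ∈ u.support
      · rw [Finset.insert_eq_self.2 h0]
      · rw [Finset.sum_insert h0, Finsupp.notMem_support_iff.1 h0, zero_add]
    · rw [if_neg (Ne.symm hk0)]
      have e2 : ∑ i ∈ u.support.erase 0, (if (0:ℕ) = k then u i else 0) = 0 := by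
        apply Finset.sum_eq_zero; intro i _; rw [if_neg (Ne.symm hk0)]
      rw [e2, sub_zero, Finset.sum_ite_eq' (u.support.erase 0) k u]
      by_cases hk : k ∈ u.support.erase 0
      · rw [if_pos hk, sub_self]
      · rw [if_neg hk, sub_zero]
        exact Finsupp.notMem_support_iff.1 (fun hs => hk (Finset.mem_erase.2 ⟨hk0, hs⟩))
  have := sub_mem hu hwL
  rw [heq] at this
  exact this

/-- Let `L ⊆ ℤ^{(ℕ)}` be a `Sym`-invariant lattice, `s u = Σᵢ u i`, and
`s_L ≥ 0` the generator of the subgroup of `ℤ` generated by `{s u : u ∈ L}`. Then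
(i) `s_L • e₁ ∈ L`; (ii) if some `u ∈ L` has `s u ≠ 0`, then `s_L • e₁` is in the
Graver basis of `L`. -/
theorem sL_basis_element (L : AddSubgroup (ℕ →₀ ℤ))
    (hL : ∀ σ, IsFinPerm σ → ∀ u ∈ L, permAct0 σ u ∈ L)
    (s : ℤ) (hs : 0 ≤ s)
    (hsL : AddSubgroup.closure {z : ℤ | ∃ u ∈ L, (u.sum fun _ m => m) = z}
      = AddSubgroup.zmultiples s) :
    s • (Finsupp.single 0 (1 : ℤ)) ∈ L ∧
    ((∃ u ∈ L, (u.sum fun _ m => m) ≠ 0) →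
      s • (Finsupp.single 0 (1 : ℤ)) ∈ GraverBasis (L : Set (ℕ →₀ ℤ))) := by
  have hsingle : s • (Finsupp.single 0 (1 : ℤ)) = Finsupp.single 0 s := by
    rw [Finsupp.smul_single, smul_eq_mul, mul_one]
  -- the sum-set is a subgroup
  set hom : (ℕ →₀ ℤ) →+ ℤ := Finsupp.liftAddHom (fun _ : ℕ => AddMonoidHom.id ℤ) with hhom
  have homapp : ∀ u : ℕ →₀ ℤ, hom u = u.sum fun _ m => m := by
    intro u; rw [hhom, Finsupp.liftAddHom_apply]; rfl
  have hset : {z : ℤ | ∃ u ∈ L, (u.sum fun _ m => m) = z}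
      = (AddSubgroup.map hom L : Set ℤ) := by
    ext z
    simp only [Set.mem_setOf_eq, AddSubgroup.coe_map, Set.mem_image, SetLike.mem_coe]
    constructor
    · rintro ⟨u, huL, rfl⟩; exact ⟨u, huL, homapp u⟩
    · rintro ⟨u, huL, rfl⟩; exact ⟨u, huL, (homapp u).symm⟩
  have hmap : AddSubgroup.map hom L = AddSubgroup.zmultiples s := by
    rw [← hsL, hset, AddSubgroup.closure_eq]
  -- part (i)
  have part1 : s • (Finsupp.single 0 (1 : ℤ)) ∈ L := by
    have hsmem : s ∈ AddSubgroup.map hom L := by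
      rw [hmap]; exact AddSubgroup.mem_zmultiples s
    obtain ⟨u, huL, husum⟩ := AddSubgroup.mem_map.1 hsmem
    rw [homapp] at husum
    rw [hsingle, ← husum]
    exact collapse L hL u huL
  refine ⟨part1, ?_⟩
  rintro ⟨u, huL, husum⟩
  -- s > 0
  have hspos : 0 < s := by
    rcases lt_or_eq_of_le hs with h | h
    · exact h
    · exfalso
      have : (u.sum fun _ m => m) ∈ AddSubgroup.zmultiples s := by
        rw [← hsL]
        exact AddSubgroup.subset_closure ⟨u, huL, rfl⟩
      obtain ⟨k, hk⟩ := this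
      rw [← h] at hk
      simp at hk
      exact husum hk.symm
  refine ⟨part1, ?_, ?_⟩
  · rw [hsingle]
    simp only [ne_eq, Finsupp.single_eq_zero]
    omega
  · intro v hvL hv0 hsq
    rw [hsingle] at hsq ⊢
    -- v vanishes away from 0
    have hvk : ∀ k, k ≠ 0 → v k = 0 := by
      intro k hk
      have := (hsq k).2
      rw [Finsupp.single_apply, if_neg (Ne.symm hk)] at this
      simpa using this
    have hveq : v = Finsupp.single 0 (v 0) := by
      ext k
      rcases eq_or_ne k 0 with rfl | hk
      · simp
      · rw [hvk k hk, Finsupp.single_apply, if_neg (Ne.symm hk)]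
    have hv0pos : 0 < v 0 := by
      have h1 := (hsq 0).1
      have h2 := (hsq 0).2
      rw [Finsupp.single_apply, if_pos rfl] at h1 h2
      have : v 0 ≠ 0 := by
        intro h
        apply hv0
        rw [hveq, h, Finsupp.single_zero]
      rcases lt_trichotomy (v 0) 0 with h | h | h
      · nlinarith
      · exact absurd h this
      · exact h
    have hvle : v 0 ≤ s := by
      have h2 := (hsq 0).2
      rw [Finsupp.single_apply, if_pos rfl, abs_of_pos hv0pos, abs_of_pos hspos] at h2
      exact h2
    -- v 0 is a multiple of s
    have : (v.sum fun _ m => m) ∈ AddSubgroup.zmultiples s := by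
      rw [← hsL]
      exact AddSubgroup.subset_closure ⟨v, hvL, rfl⟩
    have hvsum : (v.sum fun _ m => m) = v 0 := by
      conv_lhs => rw [hveq]
      rw [Finsupp.sum_single_index]; rfl
    rw [hvsum] at this
    obtain ⟨k, hk⟩ := this
    simp only [smul_eq_mul] at hk
    have hk1 : k = 1 := by
      have h1 : 1 ≤ k := by
        by_contra h
        push_neg at h
        have hk0 : k ≤ 0 := by omega
        nlinarith
      have h2 : k ≤ 1 := by
        by_contra h
        push_neg at h
        nlinarith
      omega
    rw [hveq]
    congr 1
    rw [hk1, one_mul] at hk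
    exact hk.symm
end
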